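/- (Theorem 2, FJ-DGD-N convergence with corrupted updates.) Let f_1, ..., f_N : ℝ^n → ℝ be twice continuously differentiable with symmetric Hessians whose eigenvalues all lie in [μ, L], 0 < μ ≤ L; let W be a real symmetric doubly stochastic N × N matrix with smallest eigenvalue λ_min(W); let α > 0; and set ζ = max{|1 − αμ|, |1 − αL|, |λ_min(W) − αL|}, assuming ζ < 1. Let x_i* be the unique minimizer of f_i, x* = (x_1*, ..., x_N*), and x̄ the unique fixed point of the DGD map T(z)_i = ∑_j W_{ij} z_j − α∇f_i(z_i); set x̂ = Λx* + (I − Λ)x̄, where Λ acts blockwise as (Λv)_i = λ_i v_i with λ_i ∈ [0,1]. Let (e_k) be a sequence in (ℝ^n)^N with ‖e_k‖ ≤ τ for all k. Define, from y_0 = z_0 = x_0, the iterations y_{k+1,i} = y_{k,i} − α∇f_i(y_{k,i}), z_{k+1} = T(z_k) + (W ⊗ I_n)e_k, and x_k = Λ y_k + (I − Λ) z_k. Then for every k ≥ 0, ‖x_k − x̂‖ ≤ ζ^k (‖x_0 − x*‖ + ‖x_0 − x̄‖) + (1 − min_i λ_i) τ ∑_{h=0}^{k−1} ζ^{k−h−1}.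 -/

import Mathlib

/-!
Both iterations are perturbed steps of maps `u ↦ A u - α ∇F(u)`, with `A = I` for `y` and
`A = W ⊗ I` for `z`, where `∇F` stacks the gradients of the `f i`. The derivative
`A - α ∇²F` of such a map is symmetric and lies between `λ_min(A) - αL` and `1 - αμ` in the
Loewner order, so its norm is at most `ζ` and, by the mean value theorem, the map is
`ζ`-Lipschitz. The fixed points are `x*` and `x̄`; since `‖W ⊗ I‖ ≤ 1` for doubly stochastic `W`,
the noise adds at most `τ` per step, and unrolling `d_{k+1} ≤ ζ d_k + τ` bounds `‖y_k - x*‖` and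
`‖z_k - x̄‖`. Finally `x_k - x̂ = Λ (y_k - x*) + (I - Λ) (z_k - x̄)` with `‖Λ‖ ≤ 1` and
`‖I - Λ‖ ≤ 1 - min_i λ_i`.
-/

open scoped RealInnerProductSpace
open Finset

theorem norm_sub_le_of_perturbed_iterate {F : Type*} [SeminormedAddCommGroup F] {T : F → F}
    {ζ τ : ℝ} {p : F} {s ε : ℕ → F} (hζ : 0 ≤ ζ) (hT : ∀ u v, ‖T u - T v‖ ≤ ζ * ‖u - v‖)
    (hp : T p = p) (hs : ∀ k, s (k + 1) = T (s k) + ε k) (hε : ∀ k, ‖ε k‖ ≤ τ) (k : ℕ) :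
    ‖s k - p‖ ≤ ζ ^ k * ‖s 0 - p‖ + τ * ∑ h ∈ range k, ζ ^ (k - h - 1) := by
  induction k with
  | zero => simp
  | succ k ih =>
    have hsum : ∑ h ∈ range (k + 1), ζ ^ (k + 1 - h - 1) =
        ζ * ∑ h ∈ range k, ζ ^ (k - h - 1) + 1 := by
      rw [sum_range_succ, mul_sum, show k + 1 - k - 1 = 0 by omega, pow_zero]
      congr 1
      refine sum_congr rfl fun h hh => ?_
      rw [← pow_succ', show k + 1 - h - 1 = k - h - 1 + 1 by have := mem_range.mp hh; omega]
    calc ‖s (k + 1) - p‖ = ‖(T (s k) - T p) + ε k‖ := by rw [hs, hp, add_sub_right_comm]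
      _ ≤ ζ * ‖s k - p‖ + τ := (norm_add_le _ _).trans (add_le_add (hT _ _) (hε k))
      _ ≤ ζ * (ζ ^ k * ‖s 0 - p‖ + τ * ∑ h ∈ range k, ζ ^ (k - h - 1)) + τ := by gcongr
      _ = ζ ^ (k + 1) * ‖s 0 - p‖ + τ * ∑ h ∈ range (k + 1), ζ ^ (k + 1 - h - 1) := by
        rw [hsum]; ring

section Loewner

variable {F : Type*} [NormedAddCommGroup F] [InnerProductSpace ℝ F]

/-- `T` is symmetric and `a ≤ T ≤ b` in the Loewner order. -/
def ContinuousLinearMap.IsSymmBetween (a b : ℝ) (T : F →L[ℝ] F) : Prop :=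
  (T : F →ₗ[ℝ] F).IsSymmetric ∧ ∀ v, a * ‖v‖ ^ 2 ≤ ⟪T v, v⟫ ∧ ⟪T v, v⟫ ≤ b * ‖v‖ ^ 2

namespace ContinuousLinearMap

theorem isSymmBetween_smul_id {a b c : ℝ} (hac : a ≤ c) (hcb : c ≤ b) :
    (c • ContinuousLinearMap.id ℝ F).IsSymmBetween a b := by
  refine ⟨fun u v => by simp [real_inner_smul_left, real_inner_smul_right], fun v => ?_⟩
  simp only [smul_apply, id_apply, real_inner_smul_left, real_inner_self_eq_norm_sq]
  exact ⟨by gcongr, by gcongr⟩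

namespace IsSymmBetween

variable {a b μ L α : ℝ} {A B : F →L[ℝ] F}

theorem norm_le (h : A.IsSymmBetween a b) : ‖A‖ ≤ max |a| |b| := by
  rw [A.norm_eq_iSup_rayleighQuotient h.1]
  refine ciSup_le fun v => ?_
  rcases eq_or_ne v 0 with rfl | hv
  · simp
  have hv2 : 0 < ‖v‖ ^ 2 := by positivity
  rw [rayleighQuotient, reApplyInnerSelf_apply, RCLike.re_to_real, abs_div, abs_sq,
    div_le_iff₀ hv2, abs_le]
  obtain ⟨hlo, hhi⟩ := h.2 v
  constructor
  · nlinarith [neg_abs_le a, le_max_left |a| |b|]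
  · nlinarith [le_abs_self b, le_max_right |a| |b|]

theorem sub_smul (hA : A.IsSymmBetween a b) (hB : B.IsSymmBetween μ L) (hα : 0 ≤ α) :
    (A - α • B).IsSymmBetween (a - α * L) (b - α * μ) := by
  refine ⟨fun u v => ?_, fun v => ?_⟩
  · have hAuv : ⟪A u, v⟫ = ⟪u, A v⟫ := hA.1 u v
    have hBuv : ⟪B u, v⟫ = ⟪u, B v⟫ := hB.1 u v
    change ⟪(A - α • B) u, v⟫ = ⟪u, (A - α • B) v⟫
    simp only [sub_apply, smul_apply, inner_sub_left, inner_sub_right, real_inner_smul_left,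
      real_inner_smul_right, hAuv, hBuv]
  · simp only [sub_apply, smul_apply, inner_sub_left, real_inner_smul_left]
    obtain ⟨hAlo, hAhi⟩ := hA.2 v
    obtain ⟨hBlo, hBhi⟩ := hB.2 v
    constructor <;>
      nlinarith [mul_le_mul_of_nonneg_left hBhi hα, mul_le_mul_of_nonneg_left hBlo hα]

end IsSymmBetween

end ContinuousLinearMap

open ContinuousLinearMap

variable {a b μ L α : ℝ} {A : F →L[ℝ] F} {g : F → F} {D : F → F →L[ℝ] F}

theorem norm_gradStep_sub_le (hA : A.IsSymmBetween a b) (hg : ∀ x, HasFDerivAt g (D x) x)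
    (hD : ∀ x, (D x).IsSymmBetween μ L) (hα : 0 ≤ α) (u v : F) :
    ‖(A u - α • g u) - (A v - α • g v)‖ ≤ max |a - α * L| |b - α * μ| * ‖u - v‖ :=
  convex_univ.norm_image_sub_le_of_norm_hasFDerivWithin_le
    (fun x _ => (A.hasFDerivAt.sub ((hg x).const_smul α)).hasFDerivWithinAt)
    (fun x _ => (hA.sub_smul (hD x) hα).norm_le) (Set.mem_univ v) (Set.mem_univ u)

theorem norm_gradStep_iterate_sub_le {ζ τ : ℝ} (hA : A.IsSymmBetween a b)
    (hg : ∀ x, HasFDerivAt g (D x) x) (hD : ∀ x, (D x).IsSymmBetween μ L) (hα : 0 ≤ α)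
    (hζ : max |a - α * L| |b - α * μ| ≤ ζ) {p : F} (hp : A p - α • g p = p) {s ε : ℕ → F}
    (hs : ∀ k, s (k + 1) = (A (s k) - α • g (s k)) + ε k) (hε : ∀ k, ‖ε k‖ ≤ τ) (k : ℕ) :
    ‖s k - p‖ ≤ ζ ^ k * ‖s 0 - p‖ + τ * ∑ h ∈ range k, ζ ^ (k - h - 1) :=
  norm_sub_le_of_perturbed_iterate ((abs_nonneg _).trans ((le_max_left _ _).trans hζ))
    (fun u v => (norm_gradStep_sub_le hA hg hD hα u v).trans (by gcongr)) hp hs hε k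

end Loewner

section Blocks

variable {ι E : Type*} [NormedAddCommGroup E] [InnerProductSpace ℝ E]

local notation "𝔼" => PiLp 2 fun _ : ι => E

noncomputable def PiLp.piMapCLM (A : ι → E →L[ℝ] E) : 𝔼 →L[ℝ] 𝔼 :=
  (PiLp.continuousLinearEquiv 2 ℝ _).symm.toContinuousLinearMap ∘L
    ContinuousLinearMap.piMap A ∘L (PiLp.continuousLinearEquiv 2 ℝ _).toContinuousLinearMap

@[simp]
theorem PiLp.piMapCLM_apply (A : ι → E →L[ℝ] E) (v : 𝔼) (i : ι) :
    PiLp.piMapCLM A v i = A i (v i) := rfl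

variable [Fintype ι]

theorem PiLp.hasFDerivAt_piMap {g : ι → E → E} {G : ι → E → E →L[ℝ] E}
    (hg : ∀ i x, HasFDerivAt (g i) (G i x) x) (v : 𝔼) :
    HasFDerivAt (fun w : 𝔼 => WithLp.toLp 2 fun i => g i (w i))
      (PiLp.piMapCLM fun i => G i (v i)) v := by
  rw [← hasFDerivWithinAt_univ, hasFDerivWithinAt_piLp]
  intro i
  have hi := (hg i (v i)).comp v (PiLp.hasFDerivAt_apply (𝕜 := ℝ) 2 v i)
  exact hi.hasFDerivWithinAt

theorem PiLp.isSymmBetween_piMapCLM {a b : ℝ} {A : ι → E →L[ℝ] E}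
    (hA : ∀ i, (A i).IsSymmBetween a b) : (PiLp.piMapCLM A).IsSymmBetween a b := by
  have hinner (u v : 𝔼) : ⟪PiLp.piMapCLM A u, v⟫ = ∑ i, ⟪A i (u i), v i⟫ := PiLp.inner_apply _ _
  refine ⟨fun u v => ?_, fun v => ?_⟩
  · change ⟪PiLp.piMapCLM A u, v⟫ = ⟪u, PiLp.piMapCLM A v⟫
    rw [hinner, real_inner_comm, hinner]
    exact sum_congr rfl fun i _ => by rw [real_inner_comm (u i)]; exact (hA i).1 (u i) (v i)
  · rw [hinner, PiLp.norm_sq_eq_of_L2, mul_sum, mul_sum]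
    exact ⟨sum_le_sum fun i _ => ((hA i).2 (v i)).1, sum_le_sum fun i _ => ((hA i).2 (v i)).2⟩

theorem PiLp.norm_sub_le_of_convexCombination {l : ι → ℝ} {lo : ℝ}
    (hlo : lo ∈ Set.Icc (0 : ℝ) 1) (hl : ∀ i, l i ∈ Set.Icc lo 1) {x y z x' y' z' : 𝔼}
    (hx : ∀ i, x i = l i • y i + (1 - l i) • z i)
    (hx' : ∀ i, x' i = l i • y' i + (1 - l i) • z' i) :
    ‖x - x'‖ ≤ ‖y - y'‖ + (1 - lo) * ‖z - z'‖ := by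
  set Λ := PiLp.piMapCLM fun i => l i • ContinuousLinearMap.id ℝ E
  set Λc := PiLp.piMapCLM fun i => (1 - l i) • ContinuousLinearMap.id ℝ E
  have hΛ : ‖Λ‖ ≤ 1 := by
    refine (PiLp.isSymmBetween_piMapCLM fun i =>
      ContinuousLinearMap.isSymmBetween_smul_id (hl i).1 (hl i).2).norm_le.trans ?_
    rw [abs_of_nonneg hlo.1, abs_one, max_eq_right hlo.2]
  have hΛc : ‖Λc‖ ≤ 1 - lo := by
    refine (PiLp.isSymmBetween_piMapCLM fun i =>
      ContinuousLinearMap.isSymmBetween_smul_id (sub_nonneg.mpr (hl i).2) (sub_le_sub_left (hl i).1 1)).norm_le.trans ?_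
    rw [abs_zero, abs_of_nonneg (sub_nonneg.mpr hlo.2), max_eq_right (sub_nonneg.mpr hlo.2)]
  have hsplit : x - x' = Λ (y - y') + Λc (z - z') := by
    ext i
    simp only [PiLp.sub_apply, PiLp.add_apply, hx, hx', Λ, Λc, PiLp.piMapCLM_apply,
      _root_.smul_apply, ContinuousLinearMap.id_apply, smul_sub]
    abel
  calc ‖x - x'‖ ≤ ‖Λ (y - y')‖ + ‖Λc (z - z')‖ := hsplit ▸ norm_add_le _ _
    _ ≤ 1 * ‖y - y'‖ + (1 - lo) * ‖z - z'‖ :=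
      add_le_add (Λ.le_of_opNorm_le hΛ _) (Λc.le_of_opNorm_le hΛc _)
    _ = ‖y - y'‖ + (1 - lo) * ‖z - z'‖ := by rw [one_mul]

/-- The Kronecker product `W ⊗ I`. -/
noncomputable def Matrix.kronIdCLM (W : Matrix ι ι ℝ) : 𝔼 →L[ℝ] 𝔼 :=
  (PiLp.continuousLinearEquiv 2 ℝ _).symm.toContinuousLinearMap ∘L
    (ContinuousLinearMap.pi fun i => ∑ j, W i j • ContinuousLinearMap.proj j) ∘L
      (PiLp.continuousLinearEquiv 2 ℝ _).toContinuousLinearMap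

@[simp]
theorem Matrix.kronIdCLM_apply (W : Matrix ι ι ℝ) (v : 𝔼) (i : ι) :
    W.kronIdCLM v i = ∑ j, W i j • v j := by
  simp [Matrix.kronIdCLM]

theorem Matrix.inner_kronIdCLM (W : Matrix ι ι ℝ) (u v : 𝔼) :
    ⟪W.kronIdCLM u, v⟫ = ∑ i, ∑ j, W i j * ⟪u j, v i⟫ := by
  simp only [PiLp.inner_apply, Matrix.kronIdCLM_apply, sum_inner, real_inner_smul_left]

/-- Schur product theorem applied to `A` and the Gram matrix of `v`. -/
theorem Matrix.PosSemidef.sum_mul_inner_nonneg {A : Matrix ι ι ℝ} (hA : A.PosSemidef)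
    (v : ι → E) : 0 ≤ ∑ i, ∑ j, A i j * ⟪v j, v i⟫ := by
  have := (hA.hadamard (Matrix.posSemidef_gram ℝ v)).dotProduct_mulVec_nonneg 1
  simpa [Matrix.mulVec, dotProduct, Matrix.gram, real_inner_comm] using this

open scoped MatrixOrder in
theorem Matrix.IsHermitian.posSemidef_sub_smul_one [DecidableEq ι] [Nonempty ι]
    {W : Matrix ι ι ℝ} (hW : W.IsHermitian) :
    (W - (univ.inf' univ_nonempty hW.eigenvalues) • 1).PosSemidef := by
  rw [← Matrix.le_iff, ← Algebra.algebraMap_eq_smul_one,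
    algebraMap_le_iff_le_spectrum hW.isSelfAdjoint, hW.spectrum_real_eq_range_eigenvalues]
  rintro _ ⟨i, rfl⟩
  exact inf'_le _ (mem_univ i)

theorem Matrix.norm_kronIdCLM_apply_le [DecidableEq ι] {W : Matrix ι ι ℝ}
    (hW : W ∈ doublyStochastic ℝ ι) (v : 𝔼) : ‖W.kronIdCLM v‖ ≤ ‖v‖ := by
  have hrow (i : ι) : ‖W.kronIdCLM v i‖ ^ 2 ≤ ∑ j, W i j * ‖v j‖ ^ 2 :=
    calc ‖W.kronIdCLM v i‖ ^ 2 ≤ (∑ j, W i j * ‖v j‖) ^ 2 := by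
          rw [Matrix.kronIdCLM_apply]
          gcongr
          refine (norm_sum_le _ _).trans (le_of_eq (sum_congr rfl fun j _ => ?_))
          rw [norm_smul, Real.norm_of_nonneg (nonneg_of_mem_doublyStochastic hW)]
      _ ≤ (∑ j, W i j) * ∑ j, W i j * ‖v j‖ ^ 2 :=
          sum_sq_le_sum_mul_sum_of_sq_le_mul _ (fun j _ => nonneg_of_mem_doublyStochastic hW)
            (fun j _ => mul_nonneg (nonneg_of_mem_doublyStochastic hW) (sq_nonneg _))
            (fun j _ => le_of_eq (by ring))
      _ = ∑ j, W i j * ‖v j‖ ^ 2 := by rw [sum_row_of_mem_doublyStochastic hW, one_mul]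
  refine (sq_le_sq₀ (norm_nonneg _) (norm_nonneg _)).mp ?_
  rw [PiLp.norm_sq_eq_of_L2, PiLp.norm_sq_eq_of_L2]
  calc ∑ i, ‖W.kronIdCLM v i‖ ^ 2 ≤ ∑ i, ∑ j, W i j * ‖v j‖ ^ 2 := sum_le_sum fun i _ => hrow i
    _ = ∑ j, ‖v j‖ ^ 2 := by
      rw [sum_comm]
      simp only [← sum_mul, sum_col_of_mem_doublyStochastic hW, one_mul]

theorem Matrix.isSymmBetween_kronIdCLM [DecidableEq ι] [Nonempty ι] {W : Matrix ι ι ℝ}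
    (hW : W.IsHermitian) (hWd : W ∈ doublyStochastic ℝ ι) :
    (W.kronIdCLM : 𝔼 →L[ℝ] 𝔼).IsSymmBetween (univ.inf' univ_nonempty hW.eigenvalues) 1 := by
  refine ⟨fun u v => ?_, fun v => ⟨?_, ?_⟩⟩
  · change ⟪W.kronIdCLM u, v⟫ = ⟪u, W.kronIdCLM v⟫
    rw [inner_kronIdCLM, real_inner_comm, inner_kronIdCLM, sum_comm]
    refine sum_congr rfl fun i _ => sum_congr rfl fun j _ => ?_
    rw [← hW.apply j i, real_inner_comm]
    rfl
  · have := hW.posSemidef_sub_smul_one.sum_mul_inner_nonneg v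
    simp only [Matrix.sub_apply, Matrix.smul_apply, Matrix.one_apply, sub_mul, sum_sub_distrib,
      smul_eq_mul, mul_ite, mul_one, mul_zero, ite_mul, zero_mul, sum_ite_eq, mem_univ,
      if_true] at this
    rw [inner_kronIdCLM, PiLp.norm_sq_eq_of_L2, mul_sum]
    simpa [real_inner_self_eq_norm_sq] using this
  · calc ⟪W.kronIdCLM v, v⟫ ≤ ‖W.kronIdCLM v‖ * ‖v‖ := real_inner_le_norm _ _
      _ ≤ ‖v‖ * ‖v‖ := by gcongr; exact Matrix.norm_kronIdCLM_apply_le hWd v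
      _ = 1 * ‖v‖ ^ 2 := by ring

end Blocks

section Gradient

variable {E : Type*} [NormedAddCommGroup E] [InnerProductSpace ℝ E] [CompleteSpace E]
  {f : E → ℝ}

theorem ContDiff.differentiable_gradient (hf : ContDiff ℝ 2 f) : Differentiable ℝ (gradient f) :=
  (InnerProductSpace.toDual ℝ E).symm.toContinuousLinearEquiv.differentiable.comp
    ((hf.fderiv_right (m := 1) (by norm_num)).differentiable one_ne_zero)

theorem gradient_eq_zero_of_forall_le {a : E} (h : ∀ x, f a ≤ f x) : gradient f a = 0 := by
  simp [gradient, IsLocalMin.fderiv_eq_zero (Filter.Eventually.of_forall h)]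

end Gradient

theorem stmt12_general {n N : ℕ} [NeZero N]
    (f : Fin N → EuclideanSpace ℝ (Fin n) → ℝ) (μ L α : ℝ)
    (hα : 0 < α)
    (hC2 : ∀ i, ContDiff ℝ 2 (f i))
    (hHsym : ∀ i x u v, ⟪fderiv ℝ (gradient (f i)) x u, v⟫ =
      ⟪u, fderiv ℝ (gradient (f i)) x v⟫)
    (hHess : ∀ i x v, μ * ‖v‖ ^ 2 ≤ ⟪fderiv ℝ (gradient (f i)) x v, v⟫ ∧
      ⟪fderiv ℝ (gradient (f i)) x v, v⟫ ≤ L * ‖v‖ ^ 2)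
    (W : Matrix (Fin N) (Fin N) ℝ) (hW : W.IsHermitian)
    (hWnn : ∀ i j, 0 ≤ W i j)
    (hWrow : ∀ i, ∑ j, W i j = 1)
    (hWcol : ∀ j, ∑ i, W i j = 1)
    (ζ : ℝ)
    (hζ : ζ = max (max |1 - α * μ| |1 - α * L|)
      |Finset.univ.inf' Finset.univ_nonempty hW.eigenvalues - α * L|)
    -- `xstar` stacks the unique local minimizers `x_i*` of the `f i`
    (xstar : PiLp 2 fun _ : Fin N => EuclideanSpace ℝ (Fin n))
    (hxstar : ∀ i x, f i (xstar i) ≤ f i x)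
    -- `xbar` is the (unique) fixed point of the DGD map
    (xbar : PiLp 2 fun _ : Fin N => EuclideanSpace ℝ (Fin n))
    (hxbar : ∀ i, xbar i = ∑ j, W i j • xbar j - α • gradient (f i) (xbar i))
    -- Friedkin-Johnsen stubbornness parameters
    (l : Fin N → ℝ) (hl : ∀ i, l i ∈ Set.Icc (0 : ℝ) 1)
    -- bounded noise injected by malicious agents
    (e : ℕ → PiLp 2 fun _ : Fin N => EuclideanSpace ℝ (Fin n))
    (τ : ℝ) (he : ∀ k, ‖e k‖ ≤ τ)
    -- the FJ-DGD-N iterations from a common initial point `x0`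
    (x0 : PiLp 2 fun _ : Fin N => EuclideanSpace ℝ (Fin n))
    (y z x : ℕ → PiLp 2 fun _ : Fin N => EuclideanSpace ℝ (Fin n))
    (hy0 : y 0 = x0) (hz0 : z 0 = x0)
    (hy : ∀ k i, y (k + 1) i = y k i - α • gradient (f i) (y k i))
    (hz : ∀ k i, z (k + 1) i =
      (∑ j, W i j • z k j - α • gradient (f i) (z k i)) + ∑ j, W i j • e k j)
    (hx : ∀ k i, x k i = l i • y k i + (1 - l i) • z k i)
    -- `xhat = Λ x* + (I − Λ) x̄`
    (xhat : PiLp 2 fun _ : Fin N => EuclideanSpace ℝ (Fin n))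
    (hxhat : ∀ i, xhat i = l i • xstar i + (1 - l i) • xbar i) :
    ∀ k, ‖x k - xhat‖ ≤ ζ ^ k * (‖x0 - xstar‖ + ‖x0 - xbar‖) +
      (1 - Finset.univ.inf' Finset.univ_nonempty l) * τ *
        ∑ h ∈ Finset.range k, ζ ^ (k - h - 1) := by
  intro k
  have hG := PiLp.hasFDerivAt_piMap fun i x => ((hC2 i).differentiable_gradient x).hasFDerivAt
  have hH (v : PiLp 2 fun _ : Fin N => EuclideanSpace ℝ (Fin n)) :=
    PiLp.isSymmBetween_piMapCLM fun i => ⟨hHsym i (v i), hHess i (v i)⟩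
  have hWd : W ∈ doublyStochastic ℝ (Fin N) :=
    mem_doublyStochastic_iff_sum.mpr ⟨hWnn, hWrow, hWcol⟩
  have hζy : max |1 - α * L| |1 - α * μ| ≤ ζ :=
    hζ ▸ max_le (le_max_of_le_left (le_max_right _ _)) (le_max_of_le_left (le_max_left _ _))
  have hζz : max |univ.inf' univ_nonempty hW.eigenvalues - α * L| |1 - α * μ| ≤ ζ :=
    hζ ▸ max_le (le_max_right _ _) (le_max_of_le_left (le_max_left _ _))
  have hy_le : ‖y k - xstar‖ ≤ ζ ^ k * ‖x0 - xstar‖ := by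
    simpa [hy0] using norm_gradStep_iterate_sub_le (p := xstar) (s := y)
      (ContinuousLinearMap.isSymmBetween_smul_id (c := 1) le_rfl le_rfl) hG hH hα.le hζy
      (by ext i : 1; simp [gradient_eq_zero_of_forall_le (hxstar i)])
      (fun k => by ext i : 1; simp [hy]) (fun _ => norm_zero.le) k
  have hz_le : ‖z k - xbar‖ ≤ ζ ^ k * ‖x0 - xbar‖ + τ * ∑ h ∈ range k, ζ ^ (k - h - 1) := by
    simpa [hz0] using norm_gradStep_iterate_sub_le (Matrix.isSymmBetween_kronIdCLM hW hWd) hG hH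
      hα.le hζz (p := xbar) (s := z) (by ext i : 1; simp [← hxbar])
      (fun k => by ext i : 1; simp [hz])
      (fun k => (Matrix.norm_kronIdCLM_apply_le hWd _).trans (he k)) k
  set lmin := univ.inf' univ_nonempty l
  have hlmin : lmin ∈ Set.Icc (0 : ℝ) 1 :=
    ⟨le_inf' _ _ fun i _ => (hl i).1, (inf'_le _ (mem_univ 0)).trans (hl 0).2⟩
  have hx_le := PiLp.norm_sub_le_of_convexCombination hlmin
    (fun i => ⟨inf'_le _ (mem_univ i), (hl i).2⟩) (hx k) hxhat
  have hζ0 : 0 ≤ ζ := (abs_nonneg _).trans ((le_max_left _ _).trans hζy)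
  have hdrop := mul_nonneg (mul_nonneg hlmin.1 (pow_nonneg hζ0 k)) (norm_nonneg (x0 - xbar))
  nlinarith [mul_le_mul_of_nonneg_left hz_le (sub_nonneg.mpr hlmin.2)]

/-- Theorem 2, FJ-DGD-N convergence with corrupted updates: with the
`z`-update corrupted by bounded noise `W e_k` (`‖e_k‖ ≤ τ`), the iterates
`x_k = Λ y_k + (I − Λ) z_k` satisfy
`‖x_k − x̂‖ ≤ ζ^k (‖x_0 − x*‖ + ‖x_0 − x̄‖) + (1 − min_i λ_i) τ ∑_{h<k} ζ^{k−h−1}`,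
where `x̂ = Λx* + (I − Λ)x̄` and `ζ = max {|1 − αμ|, |1 − αL|, |λmin(W) − αL|} < 1`. -/
theorem stmt12 {n N : ℕ} [NeZero N]
    (f : Fin N → EuclideanSpace ℝ (Fin n) → ℝ) (μ L α : ℝ)
    (hμ : 0 < μ) (hμL : μ ≤ L) (hα : 0 < α)
    (hC2 : ∀ i, ContDiff ℝ 2 (f i))
    (hHsym : ∀ i x u v, ⟪fderiv ℝ (gradient (f i)) x u, v⟫ =
      ⟪u, fderiv ℝ (gradient (f i)) x v⟫)
    (hHess : ∀ i x v, μ * ‖v‖ ^ 2 ≤ ⟪fderiv ℝ (gradient (f i)) x v, v⟫ ∧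
      ⟪fderiv ℝ (gradient (f i)) x v, v⟫ ≤ L * ‖v‖ ^ 2)
    (W : Matrix (Fin N) (Fin N) ℝ) (hW : W.IsHermitian)
    (hWnn : ∀ i j, 0 ≤ W i j)
    (hWrow : ∀ i, ∑ j, W i j = 1)
    (hWcol : ∀ j, ∑ i, W i j = 1)
    (ζ : ℝ)
    (hζ : ζ = max (max |1 - α * μ| |1 - α * L|)
      |Finset.univ.inf' Finset.univ_nonempty hW.eigenvalues - α * L|)
    (hζlt : ζ < 1)
    -- `xstar` stacks the unique local minimizers `x_i*` of the `f i`
    (xstar : PiLp 2 fun _ : Fin N => EuclideanSpace ℝ (Fin n))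
    (hxstar : ∀ i x, f i (xstar i) ≤ f i x)
    -- `xbar` is the (unique) fixed point of the DGD map
    (xbar : PiLp 2 fun _ : Fin N => EuclideanSpace ℝ (Fin n))
    (hxbar : ∀ i, xbar i = ∑ j, W i j • xbar j - α • gradient (f i) (xbar i))
    -- Friedkin-Johnsen stubbornness parameters
    (l : Fin N → ℝ) (hl : ∀ i, l i ∈ Set.Icc (0 : ℝ) 1)
    -- bounded noise injected by malicious agents
    (e : ℕ → PiLp 2 fun _ : Fin N => EuclideanSpace ℝ (Fin n))
    (τ : ℝ) (he : ∀ k, ‖e k‖ ≤ τ)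
    -- the FJ-DGD-N iterations from a common initial point `x0`
    (x0 : PiLp 2 fun _ : Fin N => EuclideanSpace ℝ (Fin n))
    (y z x : ℕ → PiLp 2 fun _ : Fin N => EuclideanSpace ℝ (Fin n))
    (hy0 : y 0 = x0) (hz0 : z 0 = x0)
    (hy : ∀ k i, y (k + 1) i = y k i - α • gradient (f i) (y k i))
    (hz : ∀ k i, z (k + 1) i =
      (∑ j, W i j • z k j - α • gradient (f i) (z k i)) + ∑ j, W i j • e k j)
    (hx : ∀ k i, x k i = l i • y k i + (1 - l i) • z k i)
    -- `xhat = Λ x* + (I − Λ) x̄`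
    (xhat : PiLp 2 fun _ : Fin N => EuclideanSpace ℝ (Fin n))
    (hxhat : ∀ i, xhat i = l i • xstar i + (1 - l i) • xbar i) :
    ∀ k, ‖x k - xhat‖ ≤ ζ ^ k * (‖x0 - xstar‖ + ‖x0 - xbar‖) +
      (1 - Finset.univ.inf' Finset.univ_nonempty l) * τ *
        ∑ h ∈ Finset.range k, ζ ^ (k - h - 1) :=
  stmt12_general f μ L α hα hC2 hHsym hHess W hW hWnn hWrow hWcol ζ hζ xstar hxstar xbar hxbar l hl
    e τ he x0 y z x hy0 hz0 hy hz hx xhat hxhat
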